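/- arXiv:2306.14799 — 2 statements merged into one kernel-verified Lean document; each statement's English description precedes it below -/
import Mathlib

section
/- Under the hypotheses of the behavioral-cloning error bound (same population-independent dynamics, E_{s∼ρᴱₙ}[‖πᴬₙ(·|s) − πᴱₙ(·|s)‖₁] ≤ ε for all n), the state-action occupancy measures satisfy ‖μᴱₙ − μᴬₙ‖₁ ≤ (n+1)·ε for all n < H, hence Σ_{n=0}^{H−1} ‖μᴱₙ − μᴬₙ‖₁ ≤ H²·ε. -/
open Finset

/-- State-occupancy sequence induced by a non-stationary policy `pol` under a
population-independent transition kernel `P`, starting from `ρ0`. -/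
noncomputable def flow {S A : Type*} [Fintype S] [Fintype A]
    (P : S → A → S → ℝ) (pol : ℕ → S → A → ℝ) (ρ0 : S → ℝ) : ℕ → S → ℝ
  | 0 => ρ0
  | n + 1 => fun s' => ∑ s : S, ∑ a : A, flow P pol ρ0 n s * pol n s a * P s a s'

/-- Behavioral cloning error propagation for the state-action occupancy
measures `μₙ^π(s,a) = πₙ(a|s) ρₙ^π(s)`: `‖μᴱₙ − μᴬₙ‖₁ ≤ (n+1) ε` for `n < H`
and the sum over the horizon is at most `H² ε`. -/
theorem bc_state_action_occupancy_bound {S A : Type*} [Fintype S] [Fintype A]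
    (P : S → A → S → ℝ) (πE πA : ℕ → S → A → ℝ) (ρ0 : S → ℝ) (H : ℕ) (ε : ℝ)
    (hP : ∀ s a, (∀ s', 0 ≤ P s a s') ∧ ∑ s', P s a s' = 1)
    (hπE : ∀ n s, (∀ a, 0 ≤ πE n s a) ∧ ∑ a, πE n s a = 1)
    (hπA : ∀ n s, (∀ a, 0 ≤ πA n s a) ∧ ∑ a, πA n s a = 1)
    (hρ0 : (∀ s, 0 ≤ ρ0 s) ∧ ∑ s, ρ0 s = 1)
    (hBC : ∀ n < H, ∑ s, flow P πE ρ0 n s * (∑ a, |πA n s a - πE n s a|) ≤ ε) :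
    (∀ n < H, ∑ s, ∑ a,
        |πE n s a * flow P πE ρ0 n s - πA n s a * flow P πA ρ0 n s| ≤ (n + 1) * ε) ∧
    ∑ n ∈ range H, ∑ s, ∑ a,
        |πE n s a * flow P πE ρ0 n s - πA n s a * flow P πA ρ0 n s| ≤ H ^ 2 * ε := by
  classical
  -- nonnegativity of flows
  have flow_nonneg : ∀ (pol : ℕ → S → A → ℝ), (∀ n s a, 0 ≤ pol n s a) →
      ∀ n s, 0 ≤ flow P pol ρ0 n s := by
    intro pol hpol n
    induction n with
    | zero => exact hρ0.1
    | succ n ih =>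
      intro s'
      apply Finset.sum_nonneg; intro s _
      apply Finset.sum_nonneg; intro a _
      exact mul_nonneg (mul_nonneg (ih s) (hpol n s a)) ((hP s a).1 s')
  have hE := flow_nonneg πE (fun n s a => (hπE n s).1 a)
  have hA := flow_nonneg πA (fun n s a => (hπA n s).1 a)
  -- μ-difference bound in terms of ρ-difference
  have hμ : ∀ n < H,
      ∑ s, ∑ a, |πE n s a * flow P πE ρ0 n s - πA n s a * flow P πA ρ0 n s|
        ≤ ε + ∑ s, |flow P πE ρ0 n s - flow P πA ρ0 n s| := by
    intro n hn
    have step : ∀ s, ∑ a, |πE n s a * flow P πE ρ0 n s - πA n s a * flow P πA ρ0 n s|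
        ≤ flow P πE ρ0 n s * (∑ a, |πA n s a - πE n s a|)
          + |flow P πE ρ0 n s - flow P πA ρ0 n s| := by
      intro s
      have : ∀ a, |πE n s a * flow P πE ρ0 n s - πA n s a * flow P πA ρ0 n s|
          ≤ flow P πE ρ0 n s * |πA n s a - πE n s a|
            + πA n s a * |flow P πE ρ0 n s - flow P πA ρ0 n s| := by
        intro a
        have h1 : πE n s a * flow P πE ρ0 n s - πA n s a * flow P πA ρ0 n s
            = -(flow P πE ρ0 n s * (πA n s a - πE n s a))
              + πA n s a * (flow P πE ρ0 n s - flow P πA ρ0 n s) := by ring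
        rw [h1]
        refine (abs_add_le _ _).trans ?_
        rw [abs_neg, abs_mul, abs_mul, abs_of_nonneg (hE n s),
          abs_of_nonneg ((hπA n s).1 a)]
      calc ∑ a, |πE n s a * flow P πE ρ0 n s - πA n s a * flow P πA ρ0 n s|
          ≤ ∑ a, (flow P πE ρ0 n s * |πA n s a - πE n s a|
              + πA n s a * |flow P πE ρ0 n s - flow P πA ρ0 n s|) :=
            Finset.sum_le_sum (fun a _ => this a)
        _ = flow P πE ρ0 n s * (∑ a, |πA n s a - πE n s a|)
              + |flow P πE ρ0 n s - flow P πA ρ0 n s| := by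
            rw [Finset.sum_add_distrib, ← Finset.mul_sum, ← Finset.sum_mul,
              (hπA n s).2, one_mul]
    calc ∑ s, ∑ a, |πE n s a * flow P πE ρ0 n s - πA n s a * flow P πA ρ0 n s|
        ≤ ∑ s, (flow P πE ρ0 n s * (∑ a, |πA n s a - πE n s a|)
            + |flow P πE ρ0 n s - flow P πA ρ0 n s|) :=
          Finset.sum_le_sum (fun s _ => step s)
      _ = (∑ s, flow P πE ρ0 n s * (∑ a, |πA n s a - πE n s a|))
            + ∑ s, |flow P πE ρ0 n s - flow P πA ρ0 n s| := Finset.sum_add_distrib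
      _ ≤ ε + ∑ s, |flow P πE ρ0 n s - flow P πA ρ0 n s| := by
          exact add_le_add_left (hBC n hn) _
  -- state occupancy bound
  have hρ : ∀ n ≤ H, ∑ s, |flow P πE ρ0 n s - flow P πA ρ0 n s| ≤ n * ε := by
    intro n
    induction n with
    | zero => intro _; simp [flow]
    | succ n ih =>
      intro hn1
      have hn : n < H := hn1
      have IH := ih (le_of_lt hn)
      have key : ∑ s', |flow P πE ρ0 (n+1) s' - flow P πA ρ0 (n+1) s'|
          ≤ ∑ s, ∑ a, |πE n s a * flow P πE ρ0 n s - πA n s a * flow P πA ρ0 n s| := by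
        have expand : ∀ s', flow P πE ρ0 (n+1) s' - flow P πA ρ0 (n+1) s'
            = ∑ s, ∑ a, (πE n s a * flow P πE ρ0 n s - πA n s a * flow P πA ρ0 n s)
                * P s a s' := by
          intro s'
          show (∑ s, ∑ a, flow P πE ρ0 n s * πE n s a * P s a s')
              - (∑ s, ∑ a, flow P πA ρ0 n s * πA n s a * P s a s') = _
          rw [← Finset.sum_sub_distrib]
          refine Finset.sum_congr rfl (fun s _ => ?_)
          rw [← Finset.sum_sub_distrib]
          refine Finset.sum_congr rfl (fun a _ => ?_)
          ring
        calc ∑ s', |flow P πE ρ0 (n+1) s' - flow P πA ρ0 (n+1) s'|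
            ≤ ∑ s', ∑ s, ∑ a,
                |πE n s a * flow P πE ρ0 n s - πA n s a * flow P πA ρ0 n s| * P s a s' := by
              refine Finset.sum_le_sum (fun s' _ => ?_)
              rw [expand s']
              refine (Finset.abs_sum_le_sum_abs _ _).trans
                (Finset.sum_le_sum (fun s _ => ?_))
              refine (Finset.abs_sum_le_sum_abs _ _).trans
                (Finset.sum_le_sum (fun a _ => ?_))
              rw [abs_mul, abs_of_nonneg ((hP s a).1 s')]
          _ = ∑ s, ∑ a, |πE n s a * flow P πE ρ0 n s - πA n s a * flow P πA ρ0 n s|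
                * (∑ s', P s a s') := by
              rw [Finset.sum_comm]
              refine Finset.sum_congr rfl (fun s _ => ?_)
              rw [Finset.sum_comm]
              refine Finset.sum_congr rfl (fun a _ => ?_)
              rw [Finset.mul_sum]
          _ = ∑ s, ∑ a, |πE n s a * flow P πE ρ0 n s - πA n s a * flow P πA ρ0 n s| := by
              refine Finset.sum_congr rfl (fun s _ => Finset.sum_congr rfl (fun a _ => ?_))
              rw [(hP s a).2, mul_one]
      calc ∑ s', |flow P πE ρ0 (n+1) s' - flow P πA ρ0 (n+1) s'|
          ≤ ∑ s, ∑ a, |πE n s a * flow P πE ρ0 n s - πA n s a * flow P πA ρ0 n s| := key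
        _ ≤ ε + ∑ s, |flow P πE ρ0 n s - flow P πA ρ0 n s| := hμ n hn
        _ ≤ ε + n * ε := add_le_add_right IH _
        _ = (↑(n+1)) * ε := by push_cast; ring
  have main : ∀ n < H, ∑ s, ∑ a,
      |πE n s a * flow P πE ρ0 n s - πA n s a * flow P πA ρ0 n s| ≤ (n + 1) * ε := by
    intro n hn
    calc ∑ s, ∑ a, |πE n s a * flow P πE ρ0 n s - πA n s a * flow P πA ρ0 n s|
        ≤ ε + ∑ s, |flow P πE ρ0 n s - flow P πA ρ0 n s| := hμ n hn
      _ ≤ ε + n * ε := add_le_add_right (hρ n (le_of_lt hn)) _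
      _ = (n + 1) * ε := by ring
  refine ⟨main, ?_⟩
  rcases Nat.eq_zero_or_pos H with hH | hH
  · subst hH; simp
  · have hε : 0 ≤ ε := by
      have h0 := hBC 0 hH
      refine le_trans ?_ h0
      exact Finset.sum_nonneg (fun s _ => mul_nonneg (hE 0 s)
        (Finset.sum_nonneg (fun a _ => abs_nonneg _)))
    calc ∑ n ∈ range H, ∑ s, ∑ a,
          |πE n s a * flow P πE ρ0 n s - πA n s a * flow P πA ρ0 n s|
        ≤ ∑ n ∈ range H, (H : ℝ) * ε := by
          refine Finset.sum_le_sum (fun n hn => ?_)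
          have hn' := Finset.mem_range.mp hn
          refine (main n hn').trans ?_
          have : ((n : ℝ) + 1) ≤ (H : ℝ) := by exact_mod_cast hn'
          exact mul_le_mul_of_nonneg_right this hε
      _ = H ^ 2 * ε := by
          rw [Finset.sum_const, Finset.card_range, nsmul_eq_mul]
          ring
end

section
/- In a finite-horizon mean-field game with population-independent dynamics (L_P = 0), if the reward is L_r-Lipschitz in the population distribution, bounded by r_max at the expert population, πᴱ is a Nash equilibrium, and ‖μₙ^{πᴬ} − μₙ^{πᴱ}‖₁ ≤ ε for all n, then the exploitability satisfies 𝓔(πᴬ) ≤ (2L_r + r_max)·H·ε. -/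
open Finset

/-- Value of policy `pol` against a population distribution sequence `ρpop`. -/
noncomputable def val {S A : Type*} [Fintype S] [Fintype A]
    (P : S → A → S → ℝ) (r : S → A → (S → ℝ) → ℝ) (ρ0 : S → ℝ) (H : ℕ)
    (pol : ℕ → S → A → ℝ) (ρpop : ℕ → S → ℝ) : ℝ :=
  ∑ n ∈ range H, ∑ s, ∑ a, flow P pol ρ0 n s * pol n s a * r s a (ρpop n)

lemma flow_nonneg {S A : Type*} [Fintype S] [Fintype A]
    (P : S → A → S → ℝ) (pol : ℕ → S → A → ℝ) (ρ0 : S → ℝ)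
    (hP : ∀ s a s', 0 ≤ P s a s') (hpol : ∀ n s a, 0 ≤ pol n s a)
    (hρ0 : ∀ s, 0 ≤ ρ0 s) : ∀ n s, 0 ≤ flow P pol ρ0 n s
  | 0, s => hρ0 s
  | n + 1, s => by
    simp only [flow]
    refine Finset.sum_nonneg fun x _ => Finset.sum_nonneg fun a _ => ?_
    exact mul_nonneg (mul_nonneg (flow_nonneg P pol ρ0 hP hpol hρ0 n x) (hpol n x a)) (hP x a s)

lemma flow_sum_one {S A : Type*} [Fintype S] [Fintype A]
    (P : S → A → S → ℝ) (pol : ℕ → S → A → ℝ) (ρ0 : S → ℝ)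
    (hP : ∀ s a, ∑ s', P s a s' = 1) (hpol : ∀ n s, ∑ a, pol n s a = 1)
    (hρ0 : ∑ s, ρ0 s = 1) : ∀ n, ∑ s, flow P pol ρ0 n s = 1
  | 0 => hρ0
  | n + 1 => by
    simp only [flow]
    rw [Finset.sum_comm]
    have h1 : ∀ s : S, ∑ s' : S, ∑ a : A, flow P pol ρ0 n s * pol n s a * P s a s'
        = flow P pol ρ0 n s := by
      intro s
      rw [Finset.sum_comm]
      have h2 : ∀ a : A, ∑ s' : S, flow P pol ρ0 n s * pol n s a * P s a s'
          = flow P pol ρ0 n s * pol n s a := by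
        intro a; rw [← Finset.mul_sum, hP s a, mul_one]
      simp only [h2]
      rw [← Finset.mul_sum, hpol n s, mul_one]
    simp only [h1]
    exact flow_sum_one P pol ρ0 hP hpol hρ0 n

/-- One-step population perturbation bound. -/
lemma pop_step {S A : Type*} [Fintype S] [Fintype A]
    (w : S → A → ℝ) (r : S → A → (S → ℝ) → ℝ) (ρ ρ' : S → ℝ) (Lr ε : ℝ)
    (hw : ∀ s a, 0 ≤ w s a) (hw1 : ∑ s, ∑ a, w s a = 1)
    (hLip : ∀ s a, |r s a ρ - r s a ρ'| ≤ Lr * ∑ x, |ρ x - ρ' x|)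
    (hd : ∑ x, |ρ x - ρ' x| ≤ ε) (hLr : 0 ≤ Lr) :
    (∑ s, ∑ a, w s a * r s a ρ) - (∑ s, ∑ a, w s a * r s a ρ') ≤ Lr * ε := by
  rw [← Finset.sum_sub_distrib]
  simp only [← Finset.sum_sub_distrib, ← mul_sub]
  calc (∑ s, ∑ a, w s a * (r s a ρ - r s a ρ'))
      ≤ ∑ s, ∑ a, w s a * (Lr * ε) := by
        refine Finset.sum_le_sum fun s _ => Finset.sum_le_sum fun a _ => ?_
        exact mul_le_mul_of_nonneg_left
          ((le_abs_self _).trans ((hLip s a).trans (mul_le_mul_of_nonneg_left hd hLr)))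
          (hw s a)
    _ = Lr * ε := by
        simp only [← Finset.sum_mul]
        rw [hw1, one_mul]

/-- One-step policy (occupancy) perturbation bound. -/
lemma pol_step {S A : Type*} [Fintype S] [Fintype A]
    (μE μA : S → A → ℝ) (g : S → A → ℝ) (rmax ε : ℝ)
    (hADV : ∑ s, ∑ a, |μA s a - μE s a| ≤ ε)
    (hr : ∀ s a, |g s a| ≤ rmax) (hrm : 0 ≤ rmax) :
    (∑ s, ∑ a, μE s a * g s a) - (∑ s, ∑ a, μA s a * g s a) ≤ rmax * ε := by
  rw [← Finset.sum_sub_distrib]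
  simp only [← Finset.sum_sub_distrib, ← sub_mul]
  calc (∑ s, ∑ a, (μE s a - μA s a) * g s a)
      ≤ ∑ s, ∑ a, |μA s a - μE s a| * rmax := by
        refine Finset.sum_le_sum fun s _ => Finset.sum_le_sum fun a _ => ?_
        calc (μE s a - μA s a) * g s a ≤ |(μE s a - μA s a) * g s a| := le_abs_self _
          _ = |μA s a - μE s a| * |g s a| := by rw [abs_mul, abs_sub_comm]
          _ ≤ |μA s a - μE s a| * rmax :=
              mul_le_mul_of_nonneg_left (hr s a) (abs_nonneg _)
    _ ≤ rmax * ε := by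
        simp only [← Finset.sum_mul]
        rw [mul_comm]
        exact mul_le_mul_of_nonneg_left hADV hrm

/-- Adversarial (occupancy-matching) bound on the Nash imitation gap in a
mean-field game with population-independent dynamics (`L_P = 0`):
if `‖μₙ^{πᴬ} − μₙ^{πᴱ}‖₁ ≤ ε` for all `n < H`, then
`𝓔(πᴬ) ≤ (2 L_r + r_max) H ε`. -/
theorem adv_nash_imitation_gap_pop_indep {S A : Type*} [Fintype S] [Fintype A]
    (P : S → A → S → ℝ) (r : S → A → (S → ℝ) → ℝ) (ρ0 : S → ℝ) (H : ℕ)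
    (πE πA : ℕ → S → A → ℝ) (Lr rmax ε : ℝ)
    (hP : ∀ s a, (∀ s', 0 ≤ P s a s') ∧ ∑ s', P s a s' = 1)
    (hπE : ∀ n s, (∀ a, 0 ≤ πE n s a) ∧ ∑ a, πE n s a = 1)
    (hπA : ∀ n s, (∀ a, 0 ≤ πA n s a) ∧ ∑ a, πA n s a = 1)
    (hρ0 : (∀ s, 0 ≤ ρ0 s) ∧ ∑ s, ρ0 s = 1)
    (hLip : ∀ s a (ρ ρ' : S → ℝ), |r s a ρ - r s a ρ'| ≤ Lr * ∑ x, |ρ x - ρ' x|)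
    (hrmax : ∀ n < H, ∀ s a, |r s a (flow P πE ρ0 n)| ≤ rmax)
    (hNash : ∀ π' : ℕ → S → A → ℝ, (∀ n s, (∀ a, 0 ≤ π' n s a) ∧ ∑ a, π' n s a = 1) →
      val P r ρ0 H π' (flow P πE ρ0) ≤ val P r ρ0 H πE (flow P πE ρ0))
    (hADV : ∀ n < H, ∑ s, ∑ a,
      |πA n s a * flow P πA ρ0 n s - πE n s a * flow P πE ρ0 n s| ≤ ε) :
    ∀ π' : ℕ → S → A → ℝ, (∀ n s, (∀ a, 0 ≤ π' n s a) ∧ ∑ a, π' n s a = 1) →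
      val P r ρ0 H π' (flow P πA ρ0) - val P r ρ0 H πA (flow P πA ρ0) ≤
        (2 * Lr + rmax) * H * ε := by
  
  intro π' hπ'
  rcases Nat.eq_zero_or_pos H with hH | hH
  · subst hH; simp [_root_.val]
  have hS : Nonempty S := by
    rcases isEmpty_or_nonempty S with h | h
    · exact absurd hρ0.2 (by simp)
    · exact h
  obtain ⟨s0⟩ := hS
  have hA : Nonempty A := by
    rcases isEmpty_or_nonempty A with h | h
    · exact absurd (hπE 0 s0).2 (by simp)
    · exact h
  obtain ⟨a0⟩ := hA
  have hε : 0 ≤ ε :=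
    le_trans (Finset.sum_nonneg fun s _ => Finset.sum_nonneg fun a _ => abs_nonneg _)
      (hADV 0 hH)
  have hrm : 0 ≤ rmax := le_trans (abs_nonneg _) (hrmax 0 hH s0 a0)
  haveI := Classical.decEq S
  have hLr : 0 ≤ Lr := by
    have h := hLip s0 a0 (fun _ => 0) (fun x => if x = s0 then 1 else 0)
    have h3 : ∀ x : S, |(0:ℝ) - (if x = s0 then (1:ℝ) else 0)| = if x = s0 then 1 else 0 := by
      intro x; split <;> simp
    simp only [h3, Finset.sum_ite_eq', Finset.mem_univ, if_true, mul_one] at h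
    exact le_trans (abs_nonneg _) h
  have hD : ∀ n < H, ∑ x, |flow P πA ρ0 n x - flow P πE ρ0 n x| ≤ ε := by
    intro n hn
    refine le_trans (Finset.sum_le_sum fun x _ => ?_) (hADV n hn)
    calc |flow P πA ρ0 n x - flow P πE ρ0 n x|
        = |∑ a, (πA n x a * flow P πA ρ0 n x - πE n x a * flow P πE ρ0 n x)| := by
          rw [Finset.sum_sub_distrib, ← Finset.sum_mul, ← Finset.sum_mul,
            (hπA n x).2, (hπE n x).2, one_mul, one_mul]
      _ ≤ ∑ a, |πA n x a * flow P πA ρ0 n x - πE n x a * flow P πE ρ0 n x| :=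
          Finset.abs_sum_le_sum_abs _ _
  have hw : ∀ (π : ℕ → S → A → ℝ), (∀ n s, (∀ a, 0 ≤ π n s a) ∧ ∑ a, π n s a = 1) →
      ∀ n, (∀ s a, 0 ≤ flow P π ρ0 n s * π n s a) ∧
        ∑ s, ∑ a, flow P π ρ0 n s * π n s a = 1 := by
    intro π hπ n
    constructor
    · intro s a
      exact mul_nonneg (flow_nonneg P π ρ0 (fun s a => (hP s a).1)
        (fun n s => (hπ n s).1) hρ0.1 n s) ((hπ n s).1 a)
    · have h4 : ∀ s, ∑ a, flow P π ρ0 n s * π n s a = flow P π ρ0 n s := by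
        intro s; rw [← Finset.mul_sum, (hπ n s).2, mul_one]
      simp only [h4]
      exact flow_sum_one P π ρ0 (fun s a => (hP s a).2) (fun n s => (hπ n s).2) hρ0.2 n
  have T1 : val P r ρ0 H π' (flow P πA ρ0) - val P r ρ0 H π' (flow P πE ρ0)
      ≤ (H : ℝ) * (Lr * ε) := by
    unfold _root_.val
    rw [← Finset.sum_sub_distrib]
    calc _ ≤ ∑ _n ∈ range H, Lr * ε :=
          Finset.sum_le_sum fun n hn =>
            pop_step (fun s a => flow P π' ρ0 n s * π' n s a) r _ _ Lr ε
              (hw π' hπ' n).1 (hw π' hπ' n).2 (fun s a => hLip s a _ _)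
              (hD n (mem_range.mp hn)) hLr
      _ = (H : ℝ) * (Lr * ε) := by rw [Finset.sum_const, card_range, nsmul_eq_mul]
  have T2 : val P r ρ0 H π' (flow P πE ρ0) - val P r ρ0 H πE (flow P πE ρ0) ≤ 0 :=
    sub_nonpos.mpr (hNash π' hπ')
  have T3 : val P r ρ0 H πE (flow P πE ρ0) - val P r ρ0 H πA (flow P πE ρ0)
      ≤ (H : ℝ) * (rmax * ε) := by
    unfold _root_.val
    rw [← Finset.sum_sub_distrib]
    calc _ ≤ ∑ _n ∈ range H, rmax * ε := by
          refine Finset.sum_le_sum fun n hn => ?_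
          have hn' := mem_range.mp hn
          refine pol_step (fun s a => flow P πE ρ0 n s * πE n s a)
            (fun s a => flow P πA ρ0 n s * πA n s a)
            (fun s a => r s a (flow P πE ρ0 n)) rmax ε ?_ (fun s a => hrmax n hn' s a) hrm
          have h5 := hADV n hn'
          calc ∑ s, ∑ a, |flow P πA ρ0 n s * πA n s a - flow P πE ρ0 n s * πE n s a|
              = ∑ s, ∑ a, |πA n s a * flow P πA ρ0 n s - πE n s a * flow P πE ρ0 n s| := by
                simp_rw [mul_comm]
            _ ≤ ε := h5
      _ = (H : ℝ) * (rmax * ε) := by rw [Finset.sum_const, card_range, nsmul_eq_mul]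
  have T4 : val P r ρ0 H πA (flow P πE ρ0) - val P r ρ0 H πA (flow P πA ρ0)
      ≤ (H : ℝ) * (Lr * ε) := by
    unfold _root_.val
    rw [← Finset.sum_sub_distrib]
    calc _ ≤ ∑ _n ∈ range H, Lr * ε := by
          refine Finset.sum_le_sum fun n hn => ?_
          have hn' := mem_range.mp hn
          refine pop_step (fun s a => flow P πA ρ0 n s * πA n s a) r _ _ Lr ε
            (hw πA hπA n).1 (hw πA hπA n).2 (fun s a => hLip s a _ _) ?_ hLr
          calc ∑ x, |flow P πE ρ0 n x - flow P πA ρ0 n x|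
              = ∑ x, |flow P πA ρ0 n x - flow P πE ρ0 n x| := by
                simp_rw [abs_sub_comm]
            _ ≤ ε := hD n hn'
      _ = (H : ℝ) * (Lr * ε) := by rw [Finset.sum_const, card_range, nsmul_eq_mul]
  have hfin : val P r ρ0 H π' (flow P πA ρ0) - val P r ρ0 H πA (flow P πA ρ0)
      ≤ (H : ℝ) * (Lr * ε) + 0 + (H : ℝ) * (rmax * ε) + (H : ℝ) * (Lr * ε) := by
    linarith
  calc val P r ρ0 H π' (flow P πA ρ0) - val P r ρ0 H πA (flow P πA ρ0)
      ≤ (H : ℝ) * (Lr * ε) + 0 + (H : ℝ) * (rmax * ε) + (H : ℝ) * (Lr * ε) := hfin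
    _ = (2 * Lr + rmax) * H * ε := by ring
end
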